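/- For the Poisson structure π = x² ∂/∂x ∧ ∂/∂y on ℂ[x,y], the first Poisson cohomology H¹_π is infinite-dimensional with basis given by the classes of the vector fields (k y^{k-1} x) ∂/∂x + y^k ∂/∂y for k ∈ ℕ, together with x ∂/∂y. That is, H¹_π ≅ ⊕_{k∈ℕ} ℂ·(k y^{k-1}x ∂/∂x + y^k ∂/∂y) ⊕ ℂ·(x ∂/∂y). -/

import Mathlib

/-!
Compare coefficients of `x^a y^b`. For `f ∂/∂x + g ∂/∂y`, the Poisson condition says that `f`
has no `x⁰`-terms and that `(b + 1) g_{n,b+1} = (1 - n) f_{n+1,b}`; the Hamiltonian field of `h`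
has coefficients `-(b + 1) h_{a,b+1}` and `(a + 1) h_{a+1,b}` in `x`-degree `a + 2` and none below.
So the coefficients of `x`-degree at least `2` of a Poisson field are those of a Hamiltonian one,
`g_{1,b+1}` vanishes, `f_{1,b} = (b + 1) g_{0,b+1}`, and the remaining free coefficients `g_{0,b}`
and `g_{1,0}` are exactly the coordinates along `bvf b` and `wvf`, which no Hamiltonian field has.
-/

noncomputable section

open MvPolynomial

abbrev R2 := MvPolynomial (Fin 2) ℂ

def Xv : R2 := X 0
def Yv : R2 := X 1

/-- `(f,g)` (meaning `f∂/∂x + g∂/∂y`) is a Poisson vector field for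
`π = x² ∂/∂x ∧ ∂/∂y`, i.e. `x²(∂f/∂x + ∂g/∂y) = 2xf`. -/
def IsCocycle (v : R2 × R2) : Prop :=
  Xv ^ 2 * (pderiv 0 v.1 + pderiv 1 v.2) = 2 * Xv * v.1

/-- The Hamiltonian vector field of `h`: `−x²(∂h/∂y)∂/∂x + x²(∂h/∂x)∂/∂y`. -/
def ham (h : R2) : R2 × R2 := (- (Xv ^ 2 * pderiv 1 h), Xv ^ 2 * pderiv 0 h)

/-- The basis vector fields `(k y^{k-1} x) ∂/∂x + y^k ∂/∂y`. -/
def bvf (k : ℕ) : R2 × R2 := ((k : R2) * Yv ^ (k - 1) * Xv, Yv ^ k)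

/-- The extra basis vector field `x ∂/∂y`. -/
def wvf : R2 × R2 := (0, Xv)

theorem MvPolynomial.exists_coeff_eq {σ R : Type*} [CommSemiring R] (F : (σ →₀ ℕ) → R)
    (hF : (Function.support F).Finite) : ∃ p : MvPolynomial σ R, ∀ m, coeff m p = F m :=
  ⟨AddMonoidAlgebra.ofCoeff (Finsupp.ofSupportFinite F hF), fun _ => rfl⟩

theorem MvPolynomial.finite_support_coeff_comp {σ R α : Type*} [CommSemiring R]
    {e : α → σ →₀ ℕ} (he : e.Injective) (p : MvPolynomial σ R) :
    (Function.support fun a => coeff (e a) p).Finite :=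
  (p.support.finite_toSet.preimage he.injOn).subset fun a ha => by simpa using ha

/-- The exponent of the monomial `x^a y^b`. -/
def bideg (a b : ℕ) : Fin 2 →₀ ℕ := Finsupp.single 0 a + Finsupp.single 1 b

@[simp] theorem bideg_apply_zero (a b : ℕ) : bideg a b 0 = a := by simp [bideg]

@[simp] theorem bideg_apply_one (a b : ℕ) : bideg a b 1 = b := by simp [bideg]

theorem bideg_apply_eq (m : Fin 2 →₀ ℕ) : bideg (m 0) (m 1) = m := by
  ext i; fin_cases i <;> simp

@[simp] theorem bideg_inj {a b a' b' : ℕ} : bideg a b = bideg a' b' ↔ a = a' ∧ b = b' :=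
  ⟨fun h => ⟨by simpa using congr($h 0), by simpa using congr($h 1)⟩, fun h => h.1 ▸ h.2 ▸ rfl⟩

theorem bideg_uncurry_injective : (Function.uncurry bideg).Injective :=
  fun _ _ h => Prod.ext (bideg_inj.1 h).1 (bideg_inj.1 h).2

@[simp] theorem bideg_add_bideg (a b a' b' : ℕ) :
    bideg a b + bideg a' b' = bideg (a + a') (b + b') := by
  ext i; fin_cases i <;> simp

theorem ext_bideg {p q : R2} (h : ∀ a b, coeff (bideg a b) p = coeff (bideg a b) q) : p = q :=
  MvPolynomial.ext _ _ fun m => bideg_apply_eq m ▸ h (m 0) (m 1)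

theorem exists_coeff_bideg_eq (F : ℕ → ℕ → ℂ)
    (hF : (Function.support (Function.uncurry F)).Finite) :
    ∃ p : R2, ∀ a b, coeff (bideg a b) p = F a b := by
  obtain ⟨p, hp⟩ := MvPolynomial.exists_coeff_eq (σ := Fin 2) (fun m => F (m 0) (m 1))
    ((hF.image (Function.uncurry bideg)).subset fun m hm =>
      ⟨(m 0, m 1), hm, bideg_apply_eq m⟩)
  exact ⟨p, fun a b => by simp [hp]⟩

theorem coeff_bideg_pderiv_zero (p : R2) (a b : ℕ) :
    coeff (bideg a b) (pderiv 0 p) = coeff (bideg (a + 1) b) p * (a + 1) := by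
  rw [coeff_pderiv, show Finsupp.single (0 : Fin 2) 1 = bideg 1 0 by simp [bideg]]
  simp

theorem coeff_bideg_pderiv_one (p : R2) (a b : ℕ) :
    coeff (bideg a b) (pderiv 1 p) = coeff (bideg a (b + 1)) p * (b + 1) := by
  rw [coeff_pderiv, show Finsupp.single (1 : Fin 2) 1 = bideg 0 1 by simp [bideg]]
  simp

theorem monomial_bideg (a b : ℕ) (r : ℂ) :
    monomial (bideg a b) r = C r * X 0 ^ a * X 1 ^ b := by
  simp [bideg, monomial_add_single, C_mul_X_pow_eq_monomial]

theorem coeff_bideg_monomial (a b a' b' : ℕ) (r : ℂ) :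
    coeff (bideg a b) (monomial (bideg a' b') r) = if a' = a ∧ b' = b then r else 0 := by
  simp [coeff_monomial]

theorem coeff_bideg_add_X_pow_mul (p : R2) (n a b : ℕ) :
    coeff (bideg (a + n) b) (X 0 ^ n * p) = coeff (bideg a b) p := by
  have : bideg (a + n) b = bideg n 0 + bideg a b := by simp [add_comm]
  rw [X_pow_eq_monomial, this, show Finsupp.single (0 : Fin 2) n = bideg n 0 by simp [bideg],
    coeff_monomial_mul, one_mul]

theorem coeff_bideg_X_pow_mul_of_lt (p : R2) {n a : ℕ} (h : a < n) (b : ℕ) :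
    coeff (bideg a b) (X 0 ^ n * p) = 0 := by
  rw [X_pow_eq_monomial, coeff_monomial_mul', if_neg]
  intro hle
  have := hle 0
  simp at this
  omega

theorem coeff_bideg_two_mul_X_mul (p : R2) (a b : ℕ) :
    coeff (bideg (a + 1) b) (2 * X 0 * p) = 2 * coeff (bideg a b) p := by
  rw [mul_assoc, ← map_ofNat C 2, coeff_C_mul, ← pow_one (X 0 : R2), coeff_bideg_add_X_pow_mul]

namespace IsCocycle

variable {v : R2 × R2} (hv : IsCocycle v)
include hv

theorem coeff_fst_bideg_zero (b : ℕ) : coeff (bideg 0 b) v.1 = 0 := by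
  have h := congr(coeff (bideg (0 + 1) b) $hv)
  rw [Xv, coeff_bideg_X_pow_mul_of_lt _ (by omega), coeff_bideg_two_mul_X_mul] at h
  linear_combination -h / 2

theorem coeff_snd_bideg_succ (n b : ℕ) :
    coeff (bideg n (b + 1)) v.2 * (b + 1) = (1 - n) * coeff (bideg (n + 1) b) v.1 := by
  have h := congr(coeff (bideg (n + 2) b) $hv)
  rw [Xv, coeff_bideg_add_X_pow_mul, coeff_add, coeff_bideg_pderiv_zero, coeff_bideg_pderiv_one,
    show n + 2 = n + 1 + 1 from rfl, coeff_bideg_two_mul_X_mul] at h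
  linear_combination h

end IsCocycle

theorem coeff_ham_fst_of_lt (h : R2) {a : ℕ} (ha : a < 2) (b : ℕ) :
    coeff (bideg a b) (ham h).1 = 0 := by
  simp [ham, Xv, coeff_bideg_X_pow_mul_of_lt _ ha]

theorem coeff_ham_snd_of_lt (h : R2) {a : ℕ} (ha : a < 2) (b : ℕ) :
    coeff (bideg a b) (ham h).2 = 0 := by
  simp [ham, Xv, coeff_bideg_X_pow_mul_of_lt _ ha]

theorem coeff_ham_fst (h : R2) (a b : ℕ) :
    coeff (bideg (a + 2) b) (ham h).1 = -(coeff (bideg a (b + 1)) h * (b + 1)) := by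
  simp [ham, Xv, coeff_bideg_add_X_pow_mul, coeff_bideg_pderiv_one]

theorem coeff_ham_snd (h : R2) (a b : ℕ) :
    coeff (bideg (a + 2) b) (ham h).2 = coeff (bideg (a + 1) b) h * (a + 1) := by
  simp [ham, Xv, coeff_bideg_add_X_pow_mul, coeff_bideg_pderiv_zero]

theorem bvf_eq (k : ℕ) :
    bvf k = (monomial (bideg 1 (k - 1)) (k : ℂ), monomial (bideg 0 k) 1) := by
  simp only [bvf, Xv, Yv, monomial_bideg, map_natCast, map_one]
  rw [Prod.mk.injEq]
  constructor <;> ring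

theorem wvf_eq : wvf = (0, monomial (bideg 1 0) 1) := by
  simp [wvf, Xv, monomial_bideg]

theorem coeff_bideg_combination_fst (c : ℕ →₀ ℂ) (c' : ℂ) (a b : ℕ) :
    coeff (bideg a b) ((c.sum fun k r => r • bvf k) + c' • wvf).1 =
      if a = 1 then c (b + 1) * (b + 1) else 0 := by
  simp only [Prod.fst_add, Prod.smul_fst, Finsupp.sum, Prod.fst_sum, coeff_sum,
    coeff_smul, wvf_eq, bvf_eq, coeff_bideg_monomial, smul_zero, add_zero]
  split_ifs with ha
  · subst ha
    rw [Finset.sum_eq_single (b + 1)]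
    · simp [mul_comm]
    · intro k _ hk
      rcases k with _ | k <;> simp_all
    · simp_all
  · simp [Ne.symm ha]

theorem coeff_bideg_combination_snd (c : ℕ →₀ ℂ) (c' : ℂ) (a b : ℕ) :
    coeff (bideg a b) ((c.sum fun k r => r • bvf k) + c' • wvf).2 =
      if a = 0 then c b else if a = 1 ∧ b = 0 then c' else 0 := by
  simp only [Prod.snd_add, Prod.smul_snd, Finsupp.sum, Prod.snd_sum, coeff_add, coeff_sum,
    coeff_smul, wvf_eq, bvf_eq, coeff_bideg_monomial]
  rcases a with _ | _ | a
  · rw [Finset.sum_eq_single b] <;> simp_all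
  · simp [eq_comm]
  · simp

theorem isCocycle_bvf (k : ℕ) : IsCocycle (bvf k) := by
  simp only [IsCocycle, bvf, Xv, Yv]
  rw [← map_natCast (C : ℂ →+* R2) k]
  simp [pderiv_X_of_ne (show (1 : Fin 2) ≠ 0 by decide)]
  ring

theorem isCocycle_wvf : IsCocycle wvf := by
  simp [IsCocycle, wvf, Xv, pderiv_X_of_ne (show (0 : Fin 2) ≠ 1 by decide)]

/-- Coefficients of `∫ (g / x²) dx - ∫ f₂ dy`, with `f₂(y)` the coefficient of `x²` in `f`; for a
Poisson vector field `(f, g)` this is the Hamiltonian of its part of `x`-degree at least `2`. -/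
def primitiveCoeff (f g : R2) : ℕ → ℕ → ℂ
  | 0, 0 => 0
  | 0, b + 1 => -coeff (bideg 2 b) f / (b + 1)
  | a + 1, b => coeff (bideg (a + 2) b) g / (a + 1)

theorem finite_support_primitiveCoeff (f g : R2) :
    (Function.support (Function.uncurry (primitiveCoeff f g))).Finite := by
  have hf := finite_support_coeff_comp bideg_uncurry_injective f
  have hg := finite_support_coeff_comp bideg_uncurry_injective g
  refine ((hg.image fun ab => (ab.1 - 1, ab.2)).union (hf.image fun ab => (0, ab.2 + 1))).subset ?_
  rintro ⟨_ | a, _ | b⟩ h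
  · simp [primitiveCoeff] at h
  · exact Or.inr ⟨(2, b), by simp_all [primitiveCoeff], rfl⟩
  · exact Or.inl ⟨(a + 2, 0), by simp_all [primitiveCoeff], rfl⟩
  · exact Or.inl ⟨(a + 2, b + 1), by simp_all [primitiveCoeff], rfl⟩

theorem IsCocycle.exists_eq_combination_add_ham {v : R2 × R2} (hv : IsCocycle v) :
    ∃ (c : ℕ →₀ ℂ) (c' : ℂ) (h : R2), v = (c.sum fun k a => a • bvf k) + c' • wvf + ham h := by
  obtain ⟨h, hh⟩ := exists_coeff_bideg_eq _ (finite_support_primitiveCoeff v.1 v.2)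
  refine ⟨Finsupp.ofSupportFinite (fun b => coeff (bideg 0 b) v.2)
    (finite_support_coeff_comp (fun _ _ e => (bideg_inj.1 e).2) _), coeff (bideg 1 0) v.2, h,
    Prod.ext (ext_bideg fun a b => ?_) (ext_bideg fun a b => ?_)⟩
  · rw [Prod.fst_add, coeff_add, coeff_bideg_combination_fst]
    rcases a with _ | _ | _ | a
    · simp [hv.coeff_fst_bideg_zero, coeff_ham_fst_of_lt]
    · have := hv.coeff_snd_bideg_succ 0 b
      simp_all [coeff_ham_fst_of_lt, Finsupp.ofSupportFinite_coe]
    · rw [if_neg (by omega), coeff_ham_fst, hh, primitiveCoeff]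
      field_simp
      simp
    · have := hv.coeff_snd_bideg_succ (a + 2) b
      rw [if_neg (by omega), coeff_ham_fst, hh, primitiveCoeff]
      field_simp
      push_cast at this
      linear_combination this
  · rw [Prod.snd_add, coeff_add, coeff_bideg_combination_snd]
    rcases a with _ | _ | a
    · simp [coeff_ham_snd_of_lt, Finsupp.ofSupportFinite_coe]
    · rcases b with _ | b
      · simp [coeff_ham_snd_of_lt]
      · have := hv.coeff_snd_bideg_succ 1 b
        simpa [coeff_ham_snd_of_lt, Nat.cast_add_one_ne_zero] using this
    · rw [coeff_ham_snd, hh, primitiveCoeff]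
      field_simp
      simp

theorem eq_zero_of_combination_eq_ham (c : ℕ →₀ ℂ) (c' : ℂ) (h : R2)
    (heq : (c.sum fun k a => a • bvf k) + c' • wvf = ham h) : c = 0 ∧ c' = 0 := by
  have hcoeff a b :=
    (coeff_bideg_combination_snd c c' a b).symm.trans congr(coeff (bideg a b) ($heq).2)
  refine ⟨Finsupp.ext fun b => ?_, ?_⟩
  · simpa [coeff_ham_snd_of_lt] using hcoeff 0 b
  · simpa [coeff_ham_snd_of_lt] using hcoeff 1 0

/-- For `π = x² ∂/∂x ∧ ∂/∂y`, `H¹_π` is infinite dimensional with basis the classes of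
`k y^{k-1}x ∂/∂x + y^k ∂/∂y` (`k ∈ ℕ`) and `x ∂/∂y`: these are Poisson vector fields,
every Poisson vector field is a finite linear combination of them plus a Hamiltonian one,
and no nontrivial linear combination of them is Hamiltonian. -/
theorem stmt_11 :
    (∀ k : ℕ, IsCocycle (bvf k)) ∧ IsCocycle wvf ∧
    (∀ v : R2 × R2, IsCocycle v →
      ∃ (c : ℕ →₀ ℂ) (c' : ℂ) (h : R2),
        v = (c.sum fun k a => a • bvf k) + c' • wvf + ham h) ∧
    (∀ (c : ℕ →₀ ℂ) (c' : ℂ) (h : R2),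
      (c.sum fun k a => a • bvf k) + c' • wvf = ham h → c = 0 ∧ c' = 0) :=
  ⟨isCocycle_bvf, isCocycle_wvf, fun _ hv => hv.exists_eq_combination_add_ham,
    eq_zero_of_combination_eq_ham⟩

end
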